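/- Let (X,T) be a minimal topological dynamical system, let d ≥ 1 be an integer, and let φ : (X,T) → (Y,S) be a factor map onto a topological dynamical system (Y,S) such that Q^{[d]}(X) = (φ^{[d]})^{-1}(Q^{[d]}(Y)). Then φ(x_1) = φ(x_2) implies (x_1,x_2) ∈ RP^{[d−1]}(X); that is, the relation R_φ = {(x_1,x_2) : φ(x_1)=φ(x_2)} is contained in RP^{[d−1]}(X). -/
import Mathlib


open Set

/-- The group of self-homeomorphisms of a topological space,
with `(f * g) x = f (g x)`. -/
instance homeomorphGroup {X : Type*} [TopologicalSpace X] : Group (X ≃ₜ X) where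
  mul f g := g.trans f
  one := Homeomorph.refl X
  inv := Homeomorph.symm
  mul_assoc f g h := rfl
  one_mul f := by ext x; rfl
  mul_one f := by ext x; rfl
  inv_mul_cancel f := by ext x; exact f.symm_apply_apply x

/-- `n · ε = n₁ε₁ + ⋯ + n_dε_d`. -/
def nDot {d : ℕ} (n : Fin d → ℤ) (ε : Fin d → Bool) : ℤ :=
  ∑ i, if ε i then n i else 0

/-- The vertex `(0,…,0)` of the cube `{0,1}^d`. -/
def v0 (d : ℕ) : Fin d → Bool := fun _ => false

/-- A topological dynamical system `(X,T)` is minimal if every orbit is dense. -/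
def IsMinimalTDS {X : Type*} [TopologicalSpace X] (T : X ≃ₜ X) : Prop :=
  ∀ x : X, Dense (Set.range fun n : ℤ => (T ^ n) x)

/-- The dynamical parallelepiped `Q^{[d]}(X)`: the closure in `X^{[d]} = X^({0,1}^d)`
of the set of points `(T^{n·ε} x)_{ε ∈ {0,1}^d}`, `x ∈ X`, `n ∈ ℤ^d`. -/
def cubeQ {X : Type*} [TopologicalSpace X] (T : X ≃ₜ X) (d : ℕ) :
    Set ((Fin d → Bool) → X) :=
  closure {y | ∃ (x : X) (n : Fin d → ℤ), y = fun ε => (T ^ nDot n ε) x}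

/-- The regionally proximal relation of order `k` (for `k = 0` this is all of `X × X`). -/
def RP {X : Type*} [MetricSpace X] (T : X ≃ₜ X) (k : ℕ) : Set (X × X) :=
  {p | ∀ δ > 0, ∃ (x' y' : X) (n : Fin k → ℤ),
    dist p.1 x' < δ ∧ dist p.2 y' < δ ∧
    ∀ ε : Fin k → Bool, ε ≠ v0 k →
      dist ((T ^ nDot n ε) x') ((T ^ nDot n ε) y') < δ}

/-- A factor map between topological dynamical systems: a continuous surjection
intertwining the actions. -/
def IsFactorMap {X Z : Type*} [TopologicalSpace X] [TopologicalSpace Z]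
    (T : X ≃ₜ X) (S : Z ≃ₜ Z) (π : X → Z) : Prop :=
  Continuous π ∧ Function.Surjective π ∧ ∀ x, π (T x) = S (π x)

/-- The diagonal homeomorphism `T^{[d]} = T × ⋯ × T` of `X^{[d]}`. -/
def diagHomeo {X : Type*} [TopologicalSpace X] (T : X ≃ₜ X) (d : ℕ) :
    ((Fin d → Bool) → X) ≃ₜ ((Fin d → Bool) → X) :=
  Homeomorph.piCongrRight fun _ : Fin d → Bool => T

/-- `w` is a minimal point of the homeomorphism `S`. -/
def IsMinimalPoint {W : Type*} [TopologicalSpace W] (S : W ≃ₜ W) (w : W) : Prop :=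
  ∀ y ∈ closure (Set.range fun n : ℤ => (S ^ n) w),
    closure (Set.range fun n : ℤ => (S ^ n) y)
      = closure (Set.range fun n : ℤ => (S ^ n) w)

/-- The `j`-th face transformation `T_j^{[d]}` of `X^{[d]}`. -/
def faceHomeo {X : Type*} [TopologicalSpace X] {d : ℕ} (T : X ≃ₜ X) (j : Fin d) :
    ((Fin d → Bool) → X) ≃ₜ ((Fin d → Bool) → X) :=
  Homeomorph.piCongrRight fun ε : Fin d → Bool =>
    if ε j then T else Homeomorph.refl X

/-- The face group `F^{[d]}`: the group of homeomorphisms of `X^{[d]}`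
generated by the face transformations. -/
def faceGroup {X : Type*} [TopologicalSpace X] (T : X ≃ₜ X) (d : ℕ) :
    Subgroup (((Fin d → Bool) → X) ≃ₜ ((Fin d → Bool) → X)) :=
  Subgroup.closure (Set.range (faceHomeo (d := d) T))

/-- The orbit of a point under a group of homeomorphisms. -/
def groupOrbit {W : Type*} [TopologicalSpace W] (G : Subgroup (W ≃ₜ W)) (w : W) : Set W :=
  {y | ∃ g ∈ G, g w = y}

/-- The homeomorphism `id × T_*^{[d]}` of `X^{[d]}`, fixing the `(0,…,0)`-coordinate
and applying `T` to every other coordinate. -/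
def idFaceHomeo {X : Type*} [TopologicalSpace X] (T : X ≃ₜ X) (d : ℕ) :
    ((Fin d → Bool) → X) ≃ₜ ((Fin d → Bool) → X) :=
  Homeomorph.piCongrRight fun ε : Fin d → Bool =>
    if ε = v0 d then Homeomorph.refl X else T


lemma homeomorph_mul_apply {X : Type*} [TopologicalSpace X] (f g : X ≃ₜ X) (x : X) :
    (f * g) x = f (g x) := rfl

lemma homeomorph_zpow_add_apply {X : Type*} [TopologicalSpace X] (T : X ≃ₜ X) (a b : ℤ)
    (x : X) : (T ^ (a + b)) x = (T ^ a) ((T ^ b) x) := by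
  rw [zpow_add]; rfl

lemma nDot_v0 {d : ℕ} (n : Fin d → ℤ) : nDot n (v0 d) = 0 := by
  simp [nDot, v0]

lemma nDot_zero {d : ℕ} (ε : Fin d → Bool) : nDot (0 : Fin d → ℤ) ε = 0 := by
  simp [nDot]

lemma nDot_snoc {e : ℕ} (n : Fin (e + 1) → ℤ) (ε : Fin e → Bool) (b : Bool) :
    nDot n (Fin.snoc ε b)
      = nDot (fun i => n i.castSucc) ε + (if b then n (Fin.last e) else 0) := by
  simp [nDot, Fin.sum_univ_castSucc]

lemma snoc_false_ne_v0 {e : ℕ} {ε : Fin e → Bool} (hε : ε ≠ v0 e) :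
    (Fin.snoc ε false : Fin (e + 1) → Bool) ≠ v0 (e + 1) := by
  intro h
  apply hε
  funext i
  have := congrFun h i.castSucc
  simpa [v0] using this

lemma snoc_true_ne_v0 {e : ℕ} (ε : Fin e → Bool) :
    (Fin.snoc ε true : Fin (e + 1) → Bool) ≠ v0 (e + 1) := by
  intro h
  have := congrFun h (Fin.last e)
  simp [v0] at this

/-- if `φ : X → Y` is a factor map of a minimal system with
`Q^{[d]}(X) = (φ^{[d]})⁻¹(Q^{[d]}(Y))`, then `R_φ ⊆ RP^{[d-1]}(X)`. -/
theorem statement5 {X Y : Type*} [MetricSpace X] [CompactSpace X]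
    [MetricSpace Y] [CompactSpace Y]
    (T : X ≃ₜ X) (S : Y ≃ₜ Y) (hmin : IsMinimalTDS T)
    (d : ℕ) (hd : 1 ≤ d)
    (φ : X → Y) (hφ : IsFactorMap T S φ)
    (hQ : cubeQ T d
      = (fun (y : (Fin d → Bool) → X) (ε : Fin d → Bool) => φ (y ε)) ⁻¹' cubeQ S d) :
    ∀ x₁ x₂ : X, φ x₁ = φ x₂ → (x₁, x₂) ∈ RP T (d - 1) := by
  intro x₁ x₂ hxy
  obtain ⟨e, rfl⟩ : ∃ e, d = e + 1 := ⟨d - 1, by omega⟩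
  set z : (Fin (e + 1) → Bool) → X := fun ε => if ε = v0 (e + 1) then x₁ else x₂ with hz
  have hzQ : z ∈ cubeQ T (e + 1) := by
    rw [hQ]
    apply subset_closure
    refine ⟨φ x₁, 0, ?_⟩
    funext ε
    rw [nDot_zero]
    by_cases h : ε = v0 (e + 1) <;>
      simp [z, h, ← hxy] <;> rfl
  simp only [Nat.add_sub_cancel]
  intro δ hδ
  obtain ⟨w, ⟨x', n, rfl⟩, hw⟩ := Metric.mem_closure_iff.mp hzQ (δ / 2) (by linarith)
  rw [dist_pi_lt_iff (by linarith)] at hw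
  have hw' : ∀ ε, dist (z ε) ((T ^ nDot n ε) x') < δ / 2 := hw
  refine ⟨x', (T ^ n (Fin.last e)) x', fun i => n i.castSucc, ?_, ?_, ?_⟩
  · have := hw' (v0 (e + 1))
    rw [nDot_v0] at this
    simp only [z, if_pos rfl] at this
    calc dist x₁ x' = dist x₁ ((T ^ (0:ℤ)) x') := rfl
    _ < δ / 2 := this
    _ < δ := by linarith
  · have := hw' (Fin.snoc (v0 e) true)
    rw [nDot_snoc, nDot_v0] at this
    simp only [z, if_neg (snoc_true_ne_v0 (v0 e)), if_pos trivial] at this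
    calc dist x₂ ((T ^ n (Fin.last e)) x')
        = dist x₂ ((T ^ ((0:ℤ) + n (Fin.last e))) x') := by rw [zero_add]
    _ < δ / 2 := this
    _ < δ := by linarith
  · intro ε hε
    have h1 := hw' (Fin.snoc ε false)
    have h2 := hw' (Fin.snoc ε true)
    rw [nDot_snoc] at h1 h2
    simp only [z, if_neg (snoc_false_ne_v0 hε), if_neg (snoc_true_ne_v0 ε),
      if_pos trivial, if_neg (Bool.false_ne_true), add_zero] at h1 h2
    have key : (T ^ nDot (fun i => n i.castSucc) ε) ((T ^ n (Fin.last e)) x')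
        = (T ^ (nDot (fun i => n i.castSucc) ε + n (Fin.last e))) x' := by
      rw [homeomorph_zpow_add_apply]
    calc dist ((T ^ nDot (fun i => n i.castSucc) ε) x')
          ((T ^ nDot (fun i => n i.castSucc) ε) ((T ^ n (Fin.last e)) x'))
        ≤ dist ((T ^ nDot (fun i => n i.castSucc) ε) x') x₂
          + dist x₂ ((T ^ nDot (fun i => n i.castSucc) ε) ((T ^ n (Fin.last e)) x')) :=
        dist_triangle _ _ _
    _ < δ / 2 + δ / 2 := by
        rw [key]
        exact add_lt_add (by rw [dist_comm]; exact h1) h2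
    _ = δ := by ring
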